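/- Set λ1 = (h1+h2+h3−l1−l2−l3−β+3)/2 and λ2 = (h1+h2+h3−l1−l2−l3+β+3)/2. Let λ ∈ {λ1, λ2} and assume n := −λ+1/2 is a non-negative integer. Let V³ be the complex vector space of functions on (0,∞) spanned by the monomials x ↦ x^{λ+k} for k = 0, 1, …, n (the top monomial being x^{1/2}). Then the operator A³ preserves V³, i.e., A³ g ∈ V³ for every g ∈ V³. -/

import Mathlib

noncomputable def qp (q r : ℝ) : ℂ := ((q ^ r : ℝ) : ℂ)

noncomputable def A3 (q h1 h2 h3 l1 l2 l3 b : ℝ) (t1 t2 t3 : ℂ) (g : ℝ → ℂ) (x : ℝ) : ℂ :=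
  (x : ℂ)⁻¹ * ((x : ℂ) - qp q (h1 + 1/2) * t1) * ((x : ℂ) - qp q (h2 + 1/2) * t2)
      * ((x : ℂ) - qp q (h3 + 1/2) * t3) * g (x / q)
    + (x : ℂ)⁻¹ * ((x : ℂ) - qp q (l1 - 1/2) * t1) * ((x : ℂ) - qp q (l2 - 1/2) * t2)
      * ((x : ℂ) - qp q (l3 - 1/2) * t3) * g (q * x)
    + (-(qp q (1/2) + qp q (-(1/2))) * (x : ℂ) ^ 2
        + ((qp q h1 + qp q l1) * t1 + (qp q h2 + qp q l2) * t2 + (qp q h3 + qp q l3) * t3) * (x : ℂ)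
        + qp q ((h1 + h2 + h3 + l1 + l2 + l3) / 2) * (qp q (b / 2) + qp q (-b / 2))
          * t1 * t2 * t3 * (x : ℂ)⁻¹) * g x

/-! Since `x ↦ x / q` and `x ↦ q x` rescale `x ^ μ` by `q ^ (∓μ)`, `A³` sends `x ^ μ` to a combination
of `x ^ (μ + 2)`, `x ^ (μ + 1)`, `x ^ μ` and `x ^ (μ - 1)`. On `x ^ (λ + k)` the only terms that could
leave `V³` are those with exponent above `1/2` or below `λ`, and their coefficients vanish there:
the `x ^ (μ + 2)` coefficient `q ^ μ + q ^ (-μ) - q ^ (1/2) - q ^ (-1/2)` at `μ = ±1/2`, the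
`x ^ (μ + 1)` coefficient at `μ = 1/2`, and the `x ^ (μ - 1)` coefficient at `μ = λ`, which is
exactly how `λ₁, λ₂` are chosen. -/

open Set

theorem Submodule.exists_eqOn_of_mem_span {R N ι M : Type*} [Semiring R] [AddCommMonoid N]
    [Module R N] [AddCommMonoid M] [Module R M] (L : N →ₗ[R] ι → M) {s : Set N}
    {V : Submodule R (ι → M)} {U : Set ι} (hs : ∀ g ∈ s, ∃ f ∈ V, EqOn (L g) f U) {g : N}
    (hg : g ∈ span R s) : ∃ f ∈ V, EqOn (L g) f U := by
  induction hg using Submodule.span_induction with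
  | mem g hg => exact hs g hg
  | zero => exact ⟨0, V.zero_mem, by simp [EqOn]⟩
  | add g₁ g₂ _ _ ih₁ ih₂ =>
    obtain ⟨f₁, hf₁, he₁⟩ := ih₁
    obtain ⟨f₂, hf₂, he₂⟩ := ih₂
    exact ⟨f₁ + f₂, V.add_mem hf₁ hf₂, fun x hx => by simp [he₁ hx, he₂ hx]⟩
  | smul c g _ ih =>
    obtain ⟨f, hf, he⟩ := ih
    exact ⟨c • f, V.smul_mem c hf, fun x hx => by simp [he hx]⟩

section QPow

variable {q : ℝ} (hq : 0 < q)
include hq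

lemma qp_add (a b : ℝ) : qp q (a + b) = qp q a * qp q b := by
  simp [qp, Real.rpow_add hq]

lemma qp_sub (a b : ℝ) : qp q (a - b) = qp q a / qp q b := by
  simp [qp, Real.rpow_sub hq]

lemma qp_neg (a : ℝ) : qp q (-a) = (qp q a)⁻¹ := by
  simp [qp, Real.rpow_neg hq.le]

lemma qp_ne_zero (a : ℝ) : qp q a ≠ 0 := by
  simpa [qp] using (Real.rpow_pos_of_pos hq a).ne'

end QPow

noncomputable def xpow (μ : ℝ) : ℝ → ℂ := fun x => ((x ^ μ : ℝ) : ℂ)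

noncomputable def monomialSpan (lam : ℝ) (n : ℕ) : Submodule ℂ (ℝ → ℂ) :=
  Submodule.span ℂ {f | ∃ k : ℕ, k ≤ n ∧ f = xpow (lam + k)}

section A3Monomial

variable (q h1 h2 h3 l1 l2 l3 b : ℝ) (t1 t2 t3 : ℂ)

noncomputable def A3LinearMap : (ℝ → ℂ) →ₗ[ℂ] ℝ → ℂ where
  toFun := A3 q h1 h2 h3 l1 l2 l3 b t1 t2 t3
  map_add' g₁ g₂ := by ext x; simp only [A3, Pi.add_apply]; ring
  map_smul' c g := by ext x; simp only [A3, Pi.smul_apply, smul_eq_mul, RingHom.id_apply]; ring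

noncomputable def coeffRaiseTwo (μ : ℝ) : ℂ := qp q (-μ) + qp q μ - qp q (1/2) - qp q (-(1/2))

/- The exponents below are those of `q ^ (∓μ)` times elementary symmetric products of the roots
`q ^ (h i + 1/2) * t i`, resp. `q ^ (l i - 1/2) * t i`, of the two cubic factors in `A3`. -/
noncomputable def coeffRaiseOne (μ : ℝ) : ℂ :=
  t1 * (qp q h1 + qp q l1 - qp q (h1 + 1/2 - μ) - qp q (l1 - 1/2 + μ))
    + t2 * (qp q h2 + qp q l2 - qp q (h2 + 1/2 - μ) - qp q (l2 - 1/2 + μ))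
    + t3 * (qp q h3 + qp q l3 - qp q (h3 + 1/2 - μ) - qp q (l3 - 1/2 + μ))

noncomputable def coeffDiag (μ : ℝ) : ℂ :=
  t1 * t2 * (qp q (h1 + 1/2 + (h2 + 1/2) - μ) + qp q (l1 - 1/2 + (l2 - 1/2) + μ))
    + t1 * t3 * (qp q (h1 + 1/2 + (h3 + 1/2) - μ) + qp q (l1 - 1/2 + (l3 - 1/2) + μ))
    + t2 * t3 * (qp q (h2 + 1/2 + (h3 + 1/2) - μ) + qp q (l2 - 1/2 + (l3 - 1/2) + μ))

noncomputable def coeffLower (μ : ℝ) : ℂ :=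
  t1 * t2 * t3 * (qp q ((h1 + h2 + h3 + l1 + l2 + l3) / 2 + b / 2)
    + qp q ((h1 + h2 + h3 + l1 + l2 + l3) / 2 + -b / 2)
    - qp q (h1 + 1/2 + (h2 + 1/2) + (h3 + 1/2) - μ)
    - qp q (l1 - 1/2 + (l2 - 1/2) + (l3 - 1/2) + μ))

lemma A3_xpow_eqOn (hq : 0 < q) (μ : ℝ) :
    EqOn (A3 q h1 h2 h3 l1 l2 l3 b t1 t2 t3 (xpow μ))
      (coeffRaiseTwo q μ • xpow (μ + 2)
        + coeffRaiseOne q h1 h2 h3 l1 l2 l3 t1 t2 t3 μ • xpow (μ + 1)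
        + coeffDiag q h1 h2 h3 l1 l2 l3 t1 t2 t3 μ • xpow μ
        + coeffLower q h1 h2 h3 l1 l2 l3 b t1 t2 t3 μ • xpow (μ - 1)) (Ioi 0) := by
  intro x (hx : 0 < x)
  have hqμ : ((q ^ μ : ℝ) : ℂ) = qp q μ := rfl
  have hx0 : (x : ℂ) ≠ 0 := by exact_mod_cast hx.ne'
  have := qp_ne_zero hq μ
  have := qp_ne_zero hq (1/2)
  simp only [A3, xpow, coeffRaiseTwo, coeffRaiseOne, coeffDiag, coeffLower, Pi.add_apply,
    Pi.smul_apply, smul_eq_mul, Real.div_rpow hx.le hq.le, Real.mul_rpow hq.le hx.le,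
    Real.rpow_add hx, Real.rpow_sub hx, Real.rpow_one, Real.rpow_two]
  push_cast
  simp only [hqμ, qp_add hq, qp_sub hq, qp_neg hq]
  field_simp
  ring

lemma coeffRaiseTwo_eq_zero {μ : ℝ} (hμ : μ = 1/2 ∨ μ = -(1/2)) : coeffRaiseTwo q μ = 0 := by
  rcases hμ with rfl | rfl <;> simp only [coeffRaiseTwo, neg_neg] <;> ring

lemma coeffRaiseOne_half : coeffRaiseOne q h1 h2 h3 l1 l2 l3 t1 t2 t3 (1/2) = 0 := by
  simp only [coeffRaiseOne, add_sub_cancel_right, sub_add_cancel]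
  ring

lemma coeffLower_eq_zero {lam : ℝ}
    (hlam : lam = (h1 + h2 + h3 - l1 - l2 - l3 - b + 3) / 2 ∨
      lam = (h1 + h2 + h3 - l1 - l2 - l3 + b + 3) / 2) :
    coeffLower q h1 h2 h3 l1 l2 l3 b t1 t2 t3 lam = 0 := by
  rw [coeffLower, mul_eq_zero]
  right
  rcases hlam with rfl | rfl
  · rw [sub_sub, sub_eq_zero]
    congr 2 <;> ring
  · rw [sub_sub, sub_eq_zero, add_comm (qp q _)]
    congr 2 <;> ring

variable {lam : ℝ} {n : ℕ}

lemma smul_xpow_mem_monomialSpan {c : ℂ} {ν : ℝ} (h : c ≠ 0 → ∃ j ≤ n, ν = lam + j) :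
    c • xpow ν ∈ monomialSpan lam n := by
  by_cases hc : c = 0
  · simp [hc]
  · obtain ⟨j, hj, rfl⟩ := h hc
    exact Submodule.smul_mem _ _ (Submodule.subset_span ⟨j, hj, rfl⟩)

lemma A3_xpow_exists_eqOn_monomialSpan (hq : 0 < q)
    (hlam : lam = (h1 + h2 + h3 - l1 - l2 - l3 - b + 3) / 2 ∨
      lam = (h1 + h2 + h3 - l1 - l2 - l3 + b + 3) / 2)
    (hn : (n : ℝ) = -lam + 1/2) {k : ℕ} (hk : k ≤ n) :
    ∃ f ∈ monomialSpan lam n,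
      EqOn (A3 q h1 h2 h3 l1 l2 l3 b t1 t2 t3 (xpow (lam + k))) f (Ioi 0) := by
  refine ⟨_, ?_, A3_xpow_eqOn q h1 h2 h3 l1 l2 l3 b t1 t2 t3 hq (lam + k)⟩
  refine add_mem (add_mem (add_mem ?_ ?_) ?_) ?_ <;> apply smul_xpow_mem_monomialSpan <;> intro hc
  · refine ⟨k + 2, ?_, by push_cast; ring⟩
    by_contra hkn
    have : (k : ℝ) = n ∨ (k : ℝ) + 1 = n := by norm_cast; omega
    exact hc (coeffRaiseTwo_eq_zero q (by rcases this with h | h <;> [left; right] <;> linarith))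
  · refine ⟨k + 1, ?_, by push_cast; ring⟩
    by_contra hkn
    obtain rfl : k = n := by omega
    exact hc (by rw [show lam + k = 1/2 by linarith]; exact coeffRaiseOne_half ..)
  · exact ⟨k, hk, rfl⟩
  · refine ⟨k - 1, by omega, ?_⟩
    rcases Nat.eq_zero_or_pos k with rfl | hk1
    · exact absurd (by simpa using coeffLower_eq_zero q h1 h2 h3 l1 l2 l3 b t1 t2 t3 hlam) hc
    · push_cast [Nat.cast_sub hk1]
      ring

end A3Monomial

theorem stmt12_general (q h1 h2 h3 l1 l2 l3 β : ℝ) (hq : 0 < q)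
    (t1 t2 t3 : ℂ)
    (lam : ℝ)
    (hlam : lam = (h1 + h2 + h3 - l1 - l2 - l3 - β + 3) / 2 ∨
      lam = (h1 + h2 + h3 - l1 - l2 - l3 + β + 3) / 2)
    (n : ℕ) (hn : (n : ℝ) = -lam + 1/2)
    (V : Submodule ℂ (ℝ → ℂ))
    (hV : V = Submodule.span ℂ
      {f : ℝ → ℂ | ∃ k : ℕ, k ≤ n ∧ f = fun x : ℝ => ((x ^ (lam + (k : ℝ)) : ℝ) : ℂ)})
    (g : ℝ → ℂ) (hg : g ∈ V) :
    ∃ f ∈ V, ∀ x : ℝ, 0 < x → A3 q h1 h2 h3 l1 l2 l3 β t1 t2 t3 g x = f x := by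
  subst hV
  obtain ⟨f, hf, hAf⟩ := Submodule.exists_eqOn_of_mem_span
    (A3LinearMap q h1 h2 h3 l1 l2 l3 β t1 t2 t3) (U := Ioi 0) (by
      rintro _ ⟨k, hk, rfl⟩
      exact A3_xpow_exists_eqOn_monomialSpan q h1 h2 h3 l1 l2 l3 β t1 t2 t3 hq hlam hn hk) hg
  exact ⟨f, hf, fun x hx => hAf hx⟩

theorem stmt12 (q h1 h2 h3 l1 l2 l3 β : ℝ) (hq : 0 < q) (hq1 : q ≠ 1)
    (t1 t2 t3 : ℂ) (ht1 : t1 ≠ 0) (ht2 : t2 ≠ 0) (ht3 : t3 ≠ 0)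
    (lam : ℝ)
    (hlam : lam = (h1 + h2 + h3 - l1 - l2 - l3 - β + 3) / 2 ∨
      lam = (h1 + h2 + h3 - l1 - l2 - l3 + β + 3) / 2)
    (n : ℕ) (hn : (n : ℝ) = -lam + 1/2)
    (V : Submodule ℂ (ℝ → ℂ))
    (hV : V = Submodule.span ℂ
      {f : ℝ → ℂ | ∃ k : ℕ, k ≤ n ∧ f = fun x : ℝ => ((x ^ (lam + (k : ℝ)) : ℝ) : ℂ)})
    (g : ℝ → ℂ) (hg : g ∈ V) :
    ∃ f ∈ V, ∀ x : ℝ, 0 < x → A3 q h1 h2 h3 l1 l2 l3 β t1 t2 t3 g x = f x :=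
  stmt12_general q h1 h2 h3 l1 l2 l3 β hq t1 t2 t3 lam hlam n hn V hV g hg
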